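/- arXiv:2111.12633 — 3 statements merged into one kernel-verified Lean document; each statement's English description precedes it below -/
import Mathlib

section
/- Let m > 0 be fixed, and for T > 0 let P^+_{m,T} denote the maximum value of the unique 2T-periodic solution of the switched system F(m,T). Then the map T ↦ P^+_{m,T} is strictly increasing on (0,∞) and lim_{T→∞} P^+_{m,T} = V_m^+ = arcsinh(1/m). -/
/-!
A periodic solution `P` is antisymmetric under the half-period shift, `P (t - T) = -P t`: the sum
`P t + P (t - T)` satisfies a dissipative equation, so its square decays exponentially, and being
periodic it must vanish. On `[0, T]` the solution follows `V' = 2 (1 - m sinh V)` from `-P T` up to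
its maximum `P T`, staying below the equilibrium `arsinh (1 / m)`, which Grönwall's inequality
forbids it to reach in finite time.

For `T₁ < T₂`, if `P₂ T₂ ≤ P₁ T₁` then `P₁` crosses the value `-P₂ T₂ = P₂ 0` at some time `a`,
and by uniqueness `P₁ = P₂ (· - a)` on `[a, T₁]`, whence `P₁ T₁ = P₂ (T₁ - a) < P₂ T₂`. Finally
the rise `2 P T` over `[0, T]` has speed at least `2 (1 - m sinh (P T))`, so `P T` cannot stay
below any level `M < arsinh (1 / m)` when `T` is large.
-/

open Real Filter Set

/-- The `2T`-periodic square wave: `+1` on `[0,T)`, `-1` on `[T,2T)`. -/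
noncomputable def squareWave (T t : ℝ) : ℝ :=
  if Int.fract (t / (2 * T)) < 1 / 2 then 1 else -1

/-- A solution of the switched system `F(m,T)`: a continuous function satisfying
`dV/dt = 2(u(t) - m sinh V)` away from the switching times `nT`, `n ∈ ℤ`. -/
def IsSolF (m T : ℝ) (V : ℝ → ℝ) : Prop :=
  Continuous V ∧ ∀ t : ℝ, (∀ n : ℤ, t ≠ n * T) →
    HasDerivAt V (2 * (squareWave T t - m * Real.sinh (V t))) t

open Topology

section SquareWave

variable {T : ℝ}

theorem floor_div_eq_of_mem_Ico (hT : 0 < T) {n : ℤ} {s : ℝ}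
    (hs : s ∈ Ico (n * T) ((n + 1) * T)) : ⌊s / T⌋ = n := by
  rw [Int.floor_eq_iff, le_div_iff₀ hT, div_lt_iff₀ hT]
  exact hs

theorem mem_Ico_floor_div (hT : 0 < T) (t : ℝ) : t ∈ Ico (⌊t / T⌋ * T) ((⌊t / T⌋ + 1) * T) := by
  rw [mem_Ico, ← le_div_iff₀ hT, ← div_lt_iff₀ hT]
  exact ⟨Int.floor_le _, Int.lt_floor_add_one _⟩

theorem ne_intCast_mul_of_mem_Ioo (hT : 0 < T) {n : ℤ} {s : ℝ}
    (hs : s ∈ Ioo (n * T) ((n + 1) * T)) (k : ℤ) : s ≠ k * T := by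
  rintro rfl
  have hkn := floor_div_eq_of_mem_Ico hT (Ioo_subset_Ico_self hs)
  rw [mul_div_cancel_right₀ _ hT.ne', Int.floor_intCast] at hkn
  exact hs.1.ne' (by rw [hkn])

theorem eventually_nhdsLT_ne_intCast_mul (hT : 0 < T) (t : ℝ) :
    ∀ᶠ s in 𝓝[<] t, ∀ k : ℤ, s ≠ k * T := by
  set n := ⌈t / T⌉ - 1
  have hnt : n * T < t := by
    rw [← lt_div_iff₀ hT]
    push_cast [n]
    linarith [Int.ceil_lt_add_one (t / T)]
  have htn : t ≤ (n + 1) * T := by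
    rw [← div_le_iff₀ hT]
    push_cast [n]
    linarith [Int.le_ceil (t / T)]
  filter_upwards [Ioo_mem_nhdsLT hnt] with s hs
  exact ne_intCast_mul_of_mem_Ioo hT ⟨hs.1, hs.2.trans_le htn⟩

theorem squareWave_eq (hT : 0 < T) (t : ℝ) :
    squareWave T t = if Even ⌊t / T⌋ then 1 else -1 := by
  have h2 : t / T = 2 * (t / (2 * T)) := by field_simp
  rw [squareWave, h2, Int.fract]
  set x := t / (2 * T)
  have hx := Int.floor_le x
  have hx' := Int.lt_floor_add_one x
  split_ifs with _ he he
  · rfl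
  · refine absurd ⟨⌊x⌋, ?_⟩ he
    rw [Int.floor_eq_iff]
    push_cast
    constructor <;> linarith
  · refine absurd (Int.not_even_iff_odd.2 ⟨⌊x⌋, ?_⟩) (not_not.2 he)
    rw [Int.floor_eq_iff]
    push_cast
    constructor <;> linarith
  · rfl

theorem squareWave_le_one (T t : ℝ) : squareWave T t ≤ 1 := by
  unfold squareWave
  split_ifs <;> norm_num

theorem squareWave_sub_self (hT : 0 < T) (t : ℝ) : squareWave T (t - T) = -squareWave T t := by
  rw [squareWave_eq hT, squareWave_eq hT, sub_div, div_self hT.ne', Int.floor_sub_one]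
  simp only [Int.even_sub_one]
  split_ifs <;> norm_num

theorem squareWave_eq_of_mem_Ico (hT : 0 < T) {n : ℤ} {s t : ℝ}
    (hs : s ∈ Ico (n * T) ((n + 1) * T)) (ht : t ∈ Ico (n * T) ((n + 1) * T)) :
    squareWave T s = squareWave T t := by
  rw [squareWave_eq hT, squareWave_eq hT, floor_div_eq_of_mem_Ico hT hs,
    floor_div_eq_of_mem_Ico hT ht]

theorem squareWave_of_mem_Ico (hT : 0 < T) {s : ℝ} (hs : s ∈ Ico 0 T) : squareWave T s = 1 := by
  rw [squareWave_eq hT, floor_div_eq_of_mem_Ico hT (n := 0) (by simpa using hs)]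
  simp

end SquareWave

theorem HasDerivWithinAt.comp_sub_const_Ici {f : ℝ → ℝ} {f' x a : ℝ}
    (hf : HasDerivWithinAt f f' (Ici (x - a)) (x - a)) :
    HasDerivWithinAt (fun y => f (y - a)) f' (Ici x) x := by
  have hmaps : MapsTo (· - a) (Ici x) (Ici (x - a)) := fun _ hy => sub_le_sub_right hy a
  have h := hf.comp x ((hasDerivAt_id x).sub_const a).hasDerivWithinAt hmaps
  rwa [mul_one] at h

theorem le_mul_exp_of_deriv_right_le {f f' : ℝ → ℝ} {K a b : ℝ} (hab : a ≤ b)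
    (hf : ContinuousOn f (Icc a b)) (hf' : ∀ x ∈ Ico a b, HasDerivWithinAt f (f' x) (Ici x) x)
    (bound : ∀ x ∈ Ico a b, f' x ≤ K * f x) : f b ≤ f a * exp (K * (b - a)) := by
  rw [← gronwallBound_ε0]
  exact le_gronwallBound_of_liminf_deriv_right_le hf
    (fun x hx _ hr => (hf' x hx).liminf_right_slope_le hr) le_rfl (by simpa using bound)
    b ⟨hab, le_rfl⟩

theorem Function.Periodic.eq_zero_of_mul_deriv_right_le {D D' : ℝ → ℝ} {p c : ℝ}
    (hper : Function.Periodic D p) (hp : 0 < p) (hc : 0 < c) (hD : Continuous D)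
    (hD' : ∀ t, HasDerivWithinAt D (D' t) (Ici t) t) (hdecay : ∀ t, D t * D' t ≤ -c * D t ^ 2)
    (t : ℝ) : D t = 0 := by
  have hdecay_sq := le_mul_exp_of_deriv_right_le (f := fun s => D s ^ 2) (K := -2 * c)
    (sub_le_self t hp.le) (hD.pow 2).continuousOn (fun s _ => by simpa using (hD' s).fun_pow 2)
    (fun s _ => by nlinarith [hdecay s])
  simp only [hper.sub_eq, sub_sub_cancel] at hdecay_sq
  have hexp : exp (-2 * c * p) < 1 := exp_lt_one_iff.2 (by nlinarith)
  exact pow_eq_zero_iff two_ne_zero |>.1 (by nlinarith [sq_nonneg (D t)])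

theorem exists_apply_lt_of_deriv_neg_left {f f' : ℝ → ℝ} {x : ℝ} (hf : ContinuousAt f x)
    (h : ∀ᶠ y in 𝓝[<] x, HasDerivAt f (f' y) y ∧ f' y < 0) : ∃ y, f x < f y := by
  obtain ⟨z, hzx, hz⟩ := mem_nhdsLT_iff_exists_Ioo_subset.1 h
  obtain ⟨y, hzy, hyx⟩ := exists_between (show z < x from hzx)
  have hder : ∀ s ∈ Ioo y x, HasDerivAt f (f' s) s ∧ f' s < 0 := fun s hs =>
    hz ⟨by linarith [hs.1], hs.2⟩
  have hcont : ContinuousOn f (Icc y x) := by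
    intro s hs
    rcases hs.2.eq_or_lt with rfl | hsx
    · exact hf.continuousWithinAt
    · exact (hz ⟨by linarith [hs.1], hsx⟩).1.continuousAt.continuousWithinAt
  refine ⟨y, strictAntiOn_of_deriv_neg (convex_Icc y x) hcont ?_ ⟨le_rfl, hyx.le⟩
    ⟨hyx.le, le_rfl⟩ hyx⟩
  rw [interior_Icc]
  intro s hs
  rw [(hder s hs).1.deriv]
  exact (hder s hs).2

theorem abs_sinh_sub_sinh_le {x y B : ℝ} (hx : |x| ≤ B) (hy : |y| ≤ B) :
    |sinh x - sinh y| ≤ cosh B * |x - y| := by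
  have hB : |B| = B := abs_of_nonneg ((abs_nonneg x).trans hx)
  exact (convex_Icc (-B) B).norm_image_sub_le_of_norm_hasDerivWithin_le
    (fun z _ => (hasDerivAt_sinh z).hasDerivWithinAt)
    (fun z hz => by
      rw [norm_of_nonneg (cosh_pos z).le, cosh_le_cosh, hB]
      exact abs_le.2 hz)
    (abs_le.1 hy) (abs_le.1 hx)

theorem sq_sub_le_mul_sinh_sub_sinh (x y : ℝ) : (x - y) ^ 2 ≤ (x - y) * (sinh x - sinh y) := by
  rcases le_total y x with h | h
  · nlinarith [sinh_sub_id_strictMono.monotone h]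
  · nlinarith [sinh_sub_id_strictMono.monotone h]

theorem eqOn_of_hasDerivWithinAt_one_sub_sinh {m B a b : ℝ} {f g : ℝ → ℝ}
    (hf : ContinuousOn f (Icc a b))
    (hf' : ∀ t ∈ Ico a b, HasDerivWithinAt f (2 * (1 - m * sinh (f t))) (Ici t) t)
    (hfB : ∀ t ∈ Ico a b, f t ∈ Icc (-B) B) (hg : ContinuousOn g (Icc a b))
    (hg' : ∀ t ∈ Ico a b, HasDerivWithinAt g (2 * (1 - m * sinh (g t))) (Ici t) t)
    (hgB : ∀ t ∈ Ico a b, g t ∈ Icc (-B) B) (ha : f a = g a) : EqOn f g (Icc a b) := by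
  have hlip : LipschitzOnWith (Real.toNNReal (2 * |m| * cosh B))
      (fun x => 2 * (1 - m * sinh x)) (Icc (-B) B) := by
    refine LipschitzOnWith.of_dist_le_mul fun x hx y hy => ?_
    rw [dist_eq, dist_eq, Real.coe_toNNReal _ (by positivity)]
    calc |2 * (1 - m * sinh x) - 2 * (1 - m * sinh y)| = 2 * |m| * |sinh x - sinh y| := by
          rw [show 2 * (1 - m * sinh x) - 2 * (1 - m * sinh y) = -(2 * m) * (sinh x - sinh y)
            by ring, abs_mul, abs_neg, abs_mul, abs_two]
      _ ≤ 2 * |m| * (cosh B * |x - y|) := by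
          gcongr
          exact abs_sinh_sub_sinh_le (abs_le.2 hx) (abs_le.2 hy)
      _ = 2 * |m| * cosh B * |x - y| := by ring
  exact ODE_solution_unique_of_mem_Icc_right (v := fun _ x => 2 * (1 - m * sinh x))
    (fun _ _ => hlip) hf hf' hfB hg hg' hgB ha

namespace IsSolF

variable {m T : ℝ} {P : ℝ → ℝ}

/-- At a switching time the right derivative still exists, because the square wave is
right-continuous. -/
theorem hasDerivWithinAt_Ici (hT : 0 < T) (hP : IsSolF m T P) (t : ℝ) :
    HasDerivWithinAt P (2 * (squareWave T t - m * sinh (P t))) (Ici t) t := by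
  set n := ⌊t / T⌋
  have ht := mem_Ico_floor_div hT t
  have hderiv : ∀ s ∈ Ioo t ((n + 1) * T),
      HasDerivAt P (2 * (squareWave T t - m * sinh (P s))) s := by
    intro s hs
    have hs' : s ∈ Ioo (n * T) ((n + 1) * T) := ⟨ht.1.trans_lt hs.1, hs.2⟩
    rw [← squareWave_eq_of_mem_Ico hT (Ioo_subset_Ico_self hs') ht]
    exact hP.2 s (ne_intCast_mul_of_mem_Ioo hT hs')
  refine hasDerivWithinAt_Ici_of_tendsto_deriv
    (fun s hs => (hderiv s hs).differentiableAt.differentiableWithinAt)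
    hP.1.continuousWithinAt (Ioo_mem_nhdsGT ht.2) ?_
  have hcont : Continuous fun s => 2 * (squareWave T t - m * sinh (P s)) := by
    have := hP.1
    fun_prop
  refine ((hcont.tendsto t).mono_left nhdsWithin_le_nhds).congr' ?_
  filter_upwards [Ioo_mem_nhdsGT ht.2] with s hs using (hderiv s hs).deriv.symm

theorem hasDerivWithinAt_Ici_of_mem_Ico (hT : 0 < T) (hP : IsSolF m T P) {t : ℝ}
    (ht : t ∈ Ico 0 T) : HasDerivWithinAt P (2 * (1 - m * sinh (P t))) (Ici t) t := by
  simpa [squareWave_of_mem_Ico hT ht] using hP.hasDerivWithinAt_Ici hT t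

theorem hasDerivAt_of_mem_Ioo (hT : 0 < T) (hP : IsSolF m T P) {t : ℝ} (ht : t ∈ Ioo 0 T) :
    HasDerivAt P (2 * (1 - m * sinh (P t))) t := by
  have ht' : t ∈ Ioo (((0 : ℤ) : ℝ) * T) ((((0 : ℤ) : ℝ) + 1) * T) := by simpa using ht
  simpa [squareWave_of_mem_Ico hT (Ioo_subset_Ico_self ht)] using
    hP.2 t (ne_intCast_mul_of_mem_Ioo hT ht')

variable (hm : 0 < m) (hT : 0 < T) (hP : IsSolF m T P) (hper : Function.Periodic P (2 * T))
include hm hT hP hper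

theorem sub_half_period (t : ℝ) : P (t - T) = -P t := by
  have hD' : ∀ s, HasDerivWithinAt (fun s => P s + P (s - T))
      (2 * (squareWave T s - m * sinh (P s)) +
        2 * (squareWave T (s - T) - m * sinh (P (s - T)))) (Ici s) s := fun s =>
    (hP.hasDerivWithinAt_Ici hT s).add (hP.hasDerivWithinAt_Ici hT (s - T)).comp_sub_const_Ici
  have hzero := Function.Periodic.eq_zero_of_mul_deriv_right_le (D := fun s => P s + P (s - T))
    (fun s => by simp only [hper s, add_sub_right_comm s, hper (s - T)])
    (by linarith : 0 < 2 * T) (by linarith : 0 < 2 * m)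
    (hP.1.add (hP.1.comp (continuous_sub_right T))) hD' (fun s => by
      have := sq_sub_le_mul_sinh_sub_sinh (P s) (-P (s - T))
      rw [sinh_neg] at this
      rw [squareWave_sub_self hT]
      nlinarith) t
  linarith

/-- At a maximum above `arsinh (1 / m)` the solution would be strictly decreasing just before. -/
theorem le_arsinh (t : ℝ) : P t ≤ arsinh (1 / m) := by
  obtain ⟨_, ⟨ts, rfl⟩, hmax⟩ := (hper.compact_of_continuous (by linarith) hP.1).exists_isGreatest
    (range_nonempty P)
  refine (hmax (mem_range_self t)).trans (not_lt.1 fun hts => ?_)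
  have habove : ∀ᶠ s in 𝓝[<] ts, arsinh (1 / m) < P s :=
    nhdsWithin_le_nhds (hP.1.continuousAt.eventually (lt_mem_nhds hts))
  obtain ⟨y, hy⟩ := exists_apply_lt_of_deriv_neg_left hP.1.continuousAt
    (f' := fun s => 2 * (squareWave T s - m * sinh (P s))) <| by
    filter_upwards [eventually_nhdsLT_ne_intCast_mul hT ts, habove] with s hs hPs
    refine ⟨hP.2 s hs, ?_⟩
    have : 1 / m < sinh (P s) := by rwa [← sinh_lt_sinh, sinh_arsinh] at hPs
    have : 1 < m * sinh (P s) := by rwa [div_lt_iff₀' hm] at this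
    linarith [squareWave_le_one T s]
  exact (hmax (mem_range_self y)).not_gt hy

theorem apply_zero : P 0 = -P T := by
  simpa using hP.sub_half_period hm hT hper T

theorem neg_arsinh_le (t : ℝ) : -arsinh (1 / m) ≤ P t := by
  have := hP.sub_half_period hm hT hper (t + T)
  rw [add_sub_cancel_right] at this
  linarith [hP.le_arsinh hm hT hper (t + T)]

theorem monotoneOn : MonotoneOn P (Icc 0 T) := by
  refine monotoneOn_of_deriv_nonneg (convex_Icc 0 T) hP.1.continuousOn ?_ ?_ <;>
    rw [interior_Icc] <;> intro s hs
  · exact (hP.hasDerivAt_of_mem_Ioo hT hs).differentiableAt.differentiableWithinAt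
  · rw [(hP.hasDerivAt_of_mem_Ioo hT hs).deriv]
    have : sinh (P s) ≤ 1 / m := by
      rw [← sinh_arsinh (1 / m), sinh_le_sinh]; exact hP.le_arsinh hm hT hper s
    have : m * sinh (P s) ≤ 1 := by rwa [le_div_iff₀' hm] at this
    linarith

theorem le_apply_half_period (t : ℝ) : P t ≤ P T := by
  obtain ⟨s, hs, hts⟩ := hper.exists_mem_Ico₀ (by linarith) t
  rw [hts]
  rcases le_total s T with hsT | hTs
  · exact hP.monotoneOn hm hT hper ⟨hs.1, hsT⟩ ⟨hT.le, le_rfl⟩ hsT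
  · rw [← neg_neg (P s), ← hP.sub_half_period hm hT hper s, ← neg_neg (P T),
      ← hP.apply_zero hm hT hper, neg_le_neg_iff]
    exact hP.monotoneOn hm hT hper ⟨le_rfl, hT.le⟩ ⟨by linarith, by linarith [hs.2]⟩
      (by linarith)

theorem sSup_range : sSup (range P) = P T :=
  IsGreatest.csSup_eq ⟨mem_range_self T, forall_mem_range.2 (hP.le_apply_half_period hm hT hper)⟩

theorem apply_half_period_lt_arsinh : P T < arsinh (1 / m) := by
  set Vp := arsinh (1 / m)
  have hVp : 0 < Vp := arsinh_pos_iff.2 (by positivity)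
  have hbound := le_mul_exp_of_deriv_right_le (f := fun s => P s - Vp)
    (K := -(2 * m * cosh Vp)) hT.le (hP.1.sub continuous_const).continuousOn
    (fun s hs => (hP.hasDerivWithinAt_Ici_of_mem_Ico hT hs).sub_const Vp) fun s _ => by
      have hlip := abs_sinh_sub_sinh_le (abs_le.2 ⟨neg_le_self hVp.le, le_rfl⟩)
        (abs_le.2 ⟨hP.neg_arsinh_le hm hT hper s, hP.le_arsinh hm hT hper s⟩)
      rw [abs_of_nonneg (sub_nonneg.2 (hP.le_arsinh hm hT hper s)),
        abs_of_nonneg (sub_nonneg.2 (sinh_le_sinh.2 (hP.le_arsinh hm hT hper s))),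
        sinh_arsinh] at hlip
      have : m * (1 / m) = 1 := by field_simp
      nlinarith
  have hPT : 0 ≤ P T := by linarith [hP.le_apply_half_period hm hT hper 0, hP.apply_zero hm hT hper]
  simp only [hP.apply_zero hm hT hper, sub_zero] at hbound
  nlinarith [exp_pos (-(2 * m * cosh Vp) * T)]

theorem strictMonoOn : StrictMonoOn P (Icc 0 T) := by
  refine strictMonoOn_of_deriv_pos (convex_Icc 0 T) hP.1.continuousOn ?_
  rw [interior_Icc]
  intro s hs
  rw [(hP.hasDerivAt_of_mem_Ioo hT hs).deriv]
  have : sinh (P s) < 1 / m := by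
    rw [← sinh_arsinh (1 / m), sinh_lt_sinh]
    exact (hP.le_apply_half_period hm hT hper s).trans_lt (hP.apply_half_period_lt_arsinh hm hT hper)
  have : m * sinh (P s) < 1 := by rwa [lt_div_iff₀' hm] at this
  linarith

theorem mul_one_sub_sinh_le : T * (1 - m * sinh (P T)) ≤ P T := by
  have hrise := (convex_Icc 0 T).mul_sub_le_image_sub_of_le_deriv hP.1.continuousOn
    (C := 2 * (1 - m * sinh (P T))) ?_ ?_ 0 ⟨le_rfl, hT.le⟩ T ⟨hT.le, le_rfl⟩ hT.le
  · linarith [hP.apply_zero hm hT hper]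
  all_goals rw [interior_Icc]; intro s hs
  · exact (hP.hasDerivAt_of_mem_Ioo hT hs).differentiableAt.differentiableWithinAt
  · rw [(hP.hasDerivAt_of_mem_Ioo hT hs).deriv]
    have := sinh_le_sinh.2 (hP.le_apply_half_period hm hT hper s)
    nlinarith

end IsSolF

theorem IsSolF.apply_half_period_lt {m T₁ T₂ : ℝ} {P₁ P₂ : ℝ → ℝ} (hm : 0 < m) (hT₁ : 0 < T₁)
    (hT₁₂ : T₁ < T₂) (hP₁ : IsSolF m T₁ P₁) (hper₁ : Function.Periodic P₁ (2 * T₁))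
    (hP₂ : IsSolF m T₂ P₂) (hper₂ : Function.Periodic P₂ (2 * T₂)) : P₁ T₁ < P₂ T₂ := by
  have hT₂ : 0 < T₂ := hT₁.trans hT₁₂
  by_contra! hle
  have h0₁ := hP₁.apply_zero hm hT₁ hper₁
  have h0₂ := hP₂.apply_zero hm hT₂ hper₂
  have hP₂T₂ : 0 ≤ P₂ T₂ := by linarith [hP₂.le_apply_half_period hm hT₂ hper₂ 0]
  obtain ⟨a, ha, hPa⟩ := intermediate_value_Icc hT₁.le hP₁.1.continuousOn
    (show P₂ 0 ∈ Icc (P₁ 0) (P₁ T₁) from ⟨by linarith, by linarith⟩)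
  have hbounds : ∀ {T P}, IsSolF m T P → Function.Periodic P (2 * T) → 0 < T →
      ∀ t, P t ∈ Icc (-arsinh (1 / m)) (arsinh (1 / m)) := fun hP hper hT t =>
    ⟨hP.neg_arsinh_le hm hT hper t, hP.le_arsinh hm hT hper t⟩
  have heq := eqOn_of_hasDerivWithinAt_one_sub_sinh (f := P₁) (g := fun t => P₂ (t - a))
    hP₁.1.continuousOn
    (fun t ht => hP₁.hasDerivWithinAt_Ici_of_mem_Ico hT₁ ⟨ha.1.trans ht.1, ht.2⟩)
    (fun t _ => hbounds hP₁ hper₁ hT₁ t) (hP₂.1.comp (continuous_sub_right a)).continuousOn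
    (fun t ht => (hP₂.hasDerivWithinAt_Ici_of_mem_Ico hT₂
      ⟨sub_nonneg.2 ht.1, by linarith [ht.2, ha.1]⟩).comp_sub_const_Ici)
    (fun t _ => hbounds hP₂ hper₂ hT₂ _) (by simp [hPa]) ⟨ha.2, le_rfl⟩
  have hlt := hP₂.strictMonoOn hm hT₂ hper₂ ⟨by linarith [ha.2], by linarith [ha.1]⟩
    ⟨hT₂.le, le_rfl⟩ (show T₁ - a < T₂ by linarith [ha.1])
  simp only at heq
  linarith

theorem tendsto_arsinh_of_mul_one_sub_sinh_le {m : ℝ} (hm : 0 < m) {F : ℝ → ℝ}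
    (hlt : ∀ T, 0 < T → F T < arsinh (1 / m))
    (hle : ∀ T, 0 < T → T * (1 - m * sinh (F T)) ≤ F T) :
    Tendsto F atTop (𝓝 (arsinh (1 / m))) := by
  rw [tendsto_order]
  refine ⟨fun b hb => ?_, fun b hb => ?_⟩
  · set M := max b 0
    have hM : M < arsinh (1 / m) := max_lt hb (arsinh_pos_iff.2 (by positivity))
    have hδ : 0 < 1 - m * sinh M := by
      have : sinh M < 1 / m := by rwa [← sinh_arsinh (1 / m), sinh_lt_sinh]
      rw [lt_div_iff₀' hm] at this
      linarith
    filter_upwards [eventually_gt_atTop (M / (1 - m * sinh M)), eventually_gt_atTop 0]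
      with T hTM hT
    by_contra! hFT
    have hFM : F T ≤ M := hFT.trans (le_max_left b 0)
    have : T * (1 - m * sinh M) ≤ M := by
      have := mul_le_mul_of_nonneg_left (sinh_le_sinh.2 hFM) (mul_nonneg hT.le hm.le)
      nlinarith [hle T hT]
    rw [div_lt_iff₀ hδ] at hTM
    linarith
  · filter_upwards [eventually_gt_atTop 0] with T hT
    exact (hlt T hT).trans hb

theorem statement1 (m : ℝ) (hm : 0 < m) (Pmax : ℝ → ℝ)
    (hPmax : ∀ T : ℝ, 0 < T → ∃ P : ℝ → ℝ,
      IsSolF m T P ∧ Function.Periodic P (2 * T) ∧ Pmax T = sSup (Set.range P)) :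
    StrictMonoOn Pmax (Set.Ioi (0:ℝ)) ∧
    Filter.Tendsto Pmax Filter.atTop (nhds (Real.arsinh (1 / m))) := by
  choose! P hP hper hPmax using hPmax
  have hmax : ∀ T, 0 < T → Pmax T = P T T := fun T hT =>
    (hPmax T hT).trans ((hP T hT).sSup_range hm hT (hper T hT))
  refine ⟨fun T₁ hT₁ T₂ hT₂ h => ?_, ?_⟩
  · rw [hmax T₁ hT₁, hmax T₂ hT₂]
    exact (hP T₁ hT₁).apply_half_period_lt hm hT₁ h (hper T₁ hT₁) (hP T₂ hT₂) (hper T₂ hT₂)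
  · refine tendsto_arsinh_of_mul_one_sub_sinh_le hm (fun T hT => ?_) (fun T hT => ?_) <;>
      rw [hmax T hT]
    · exact (hP T hT).apply_half_period_lt_arsinh hm hT (hper T hT)
    · exact (hP T hT).mul_one_sub_sinh_le hm hT (hper T hT)
end

section
/- Let 0 < ε < 1. There exists a threshold T** > 0 (depending only on ε) such that for every 0 < T < T** and every m > 0, one has Δ(ε,m,T) < 0. -/
/-
Let `V = P m T`. At a global maximum of `V` the right-hand side `2 (u - m sinh V)` cannot
be negative nearby, so `m sinh V ≤ 1` there, and symmetrically at a minimum; hence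
`|m sinh V| ≤ 1` everywhere and `|V'| ≤ 4`. Integrating the equation over a period, where `V`
returns to its value and the square wave has mean zero, gives `∫ sinh V = 0`, so `V` vanishes
somewhere in `[0, 2T]` and `|V| ≤ 8T` on that period. Finally
`m (cosh V - 1) ≤ V · m sinh V ≤ 8T`, so the integrand of `Δ` is negative once `T < ε / 8`.
-/

open Real Filter Set

/-- The quantity `Δ(ε,m,T)` associated with the periodic solution `P` of `F(m,T)`. -/
noncomputable def DeltaP (ε m T : ℝ) (P : ℝ → ℝ) : ℝ :=
  (1 / (2 * T)) * ∫ s in (0:ℝ)..(2 * T), 2 * (m * Real.cosh (P s) - m - ε)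

open MeasureTheory Topology

/- `cosh x - 1 ≤ x sinh x` is the sum of `(1 - x) eˣ ≤ 1` and `(1 + x) e⁻ˣ ≤ 1`,
both instances of `1 + y ≤ eʸ`. -/
lemma cosh_sub_one_le_mul_sinh (x : ℝ) : cosh x - 1 ≤ x * sinh x := by
  have h₁ : (1 - x) * exp x ≤ 1 := by
    calc (1 - x) * exp x ≤ exp (-x) * exp x := by
          gcongr; linarith [add_one_le_exp (-x)]
      _ = 1 := by rw [← exp_add, neg_add_cancel, exp_zero]
  have h₂ : (1 + x) * exp (-x) ≤ 1 := by
    calc (1 + x) * exp (-x) ≤ exp x * exp (-x) := by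
          gcongr; linarith [add_one_le_exp x]
      _ = 1 := by rw [← exp_add, add_neg_cancel, exp_zero]
  rw [cosh_eq, sinh_eq]
  linarith

lemma exists_eq_zero_of_intervalIntegral_eq_zero {f : ℝ → ℝ} {a b : ℝ} (hab : a < b)
    (hf : ContinuousOn f (Icc a b)) (h : ∫ x in a..b, f x = 0) : ∃ c ∈ Icc a b, f c = 0 := by
  have hfi : IntervalIntegrable f volume a b := hf.intervalIntegrable_of_Icc hab.le
  obtain ⟨c₁, hc₁, hfc₁⟩ : ∃ c ∈ Icc a b, f c ≤ 0 := by
    by_contra! hpos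
    have := intervalIntegral.intervalIntegral_pos_of_pos_on hfi
      (fun x hx => hpos x (Ioo_subset_Icc_self hx)) hab
    linarith
  obtain ⟨c₂, hc₂, hfc₂⟩ : ∃ c ∈ Icc a b, 0 ≤ f c := by
    by_contra! hneg
    have := intervalIntegral.intervalIntegral_pos_of_pos_on (f := fun x => -f x) hfi.neg
      (fun x hx => neg_pos.2 (hneg x (Ioo_subset_Icc_self hx))) hab
    rw [intervalIntegral.integral_neg] at this
    linarith
  exact isPreconnected_Icc.intermediate_value hc₁ hc₂ hf ⟨hfc₁, hfc₂⟩

lemma exists_lt_of_eventually_deriv_neg {f g : ℝ → ℝ} {c : ℝ}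
    (hfg : ∀ a b, ∫ t in a..b, g t = f b - f a)
    (hg : ∀ a b, IntervalIntegrable g volume a b)
    (hneg : ∀ᶠ t in 𝓝 c, g t < 0) : ∃ a, f c < f a := by
  obtain ⟨a, hac, hsub⟩ := mem_nhdsLT_iff_exists_Ioo_subset.1 (nhdsWithin_le_nhds hneg)
  refine ⟨a, ?_⟩
  have := intervalIntegral.intervalIntegral_pos_of_pos_on (f := fun t => -g t) (hg a c).neg
    (fun x hx => neg_pos.2 (hsub hx)) hac
  rw [intervalIntegral.integral_neg, hfg] at this
  linarith

lemma Function.Periodic.exists_forall_ge {f : ℝ → ℝ} {c : ℝ}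
    (hp : Function.Periodic f c) (hc : c ≠ 0) (hf : Continuous f) :
    ∃ x, ∀ y, f y ≤ f x := by
  obtain ⟨_, ⟨x, rfl⟩, hx⟩ :=
    (hp.compact_of_continuous hc hf).exists_isGreatest (range_nonempty f)
  exact ⟨x, fun y => hx ⟨y, rfl⟩⟩

lemma abs_squareWave_le_one (T t : ℝ) : |squareWave T t| ≤ 1 := by
  unfold squareWave; split <;> norm_num

lemma measurable_squareWave (T : ℝ) : Measurable (squareWave T) :=
  Measurable.ite (measurableSet_lt (measurable_fract.comp (measurable_id.div_const _))
    measurable_const) measurable_const measurable_const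

lemma intervalIntegrable_squareWave (T a b : ℝ) :
    IntervalIntegrable (squareWave T) volume a b :=
  IntervalIntegrable.mono_fun' (g := fun _ => 1) intervalIntegrable_const
    (measurable_squareWave T).aestronglyMeasurable
    (ae_of_all _ fun t => by simpa using abs_squareWave_le_one T t)

lemma squareWave_antiperiodic {T : ℝ} (hT : T ≠ 0) :
    Function.Antiperiodic (squareWave T) T := by
  intro t
  unfold squareWave
  rw [show (t + T) / (2 * T) = t / (2 * T) + 1 / 2 by field_simp]
  set x := t / (2 * T)
  rcases lt_or_ge (Int.fract x) (1 / 2) with h | h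
  · have : Int.fract (x + 1 / 2) = Int.fract x + 1 / 2 := Int.fract_eq_iff.2
      ⟨by linarith [Int.fract_nonneg x], by linarith, ⌊x⌋,
        by linarith [Int.self_sub_fract x]⟩
    rw [this, if_neg (not_lt.2 (by linarith [Int.fract_nonneg x])), if_pos h]
  · have : Int.fract (x + 1 / 2) = Int.fract x - 1 / 2 := Int.fract_eq_iff.2
      ⟨by linarith, by linarith [Int.fract_lt_one x], ⌊x⌋ + 1, by
        push_cast; linarith [Int.self_sub_fract x]⟩
    rw [this, if_pos (by linarith [Int.fract_lt_one x]), if_neg (not_lt.2 h), neg_neg]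

lemma integral_squareWave {T : ℝ} (hT : T ≠ 0) :
    ∫ t in (0 : ℝ)..2 * T, squareWave T t = 0 := by
  have hsecond : ∫ t in T..2 * T, squareWave T t = -∫ t in (0 : ℝ)..T, squareWave T t := by
    calc ∫ t in T..2 * T, squareWave T t = ∫ t in (0 : ℝ)..T, squareWave T (t + T) := by
          rw [intervalIntegral.integral_comp_add_right]; congr 1 <;> ring
      _ = -∫ t in (0 : ℝ)..T, squareWave T t := by
          rw [← intervalIntegral.integral_neg]
          exact intervalIntegral.integral_congr fun t _ => squareWave_antiperiodic hT t
  rw [← intervalIntegral.integral_add_adjacent_intervals (b := T)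
    (intervalIntegrable_squareWave T _ _) (intervalIntegrable_squareWave T _ _), hsecond,
    add_neg_cancel]

namespace IsSolF

variable {m T : ℝ} {V : ℝ → ℝ}

lemma intervalIntegrable_deriv (hV : IsSolF m T V) (a b : ℝ) :
    IntervalIntegrable (fun t => 2 * (squareWave T t - m * sinh (V t))) volume a b :=
  ((intervalIntegrable_squareWave T a b).sub
    ((continuous_const.mul (continuous_sinh.comp hV.1)).intervalIntegrable a b)).const_mul 2

lemma integral_eq_sub (hV : IsSolF m T V) (a b : ℝ) :
    ∫ t in a..b, 2 * (squareWave T t - m * sinh (V t)) = V b - V a :=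
  integral_eq_of_hasDerivAt_off_countable _ _ (countable_range fun n : ℤ => n * T)
    hV.1.continuousOn (fun t ht => hV.2 t fun n hn => ht.2 ⟨n, hn.symm⟩)
    (hV.intervalIntegrable_deriv a b)

lemma mul_sinh_le_one_of_forall_le (hV : IsSolF m T V) {c : ℝ} (hc : ∀ t, V t ≤ V c) :
    m * sinh (V c) ≤ 1 := by
  by_contra! h
  have hcont : Continuous fun t => m * sinh (V t) :=
    continuous_const.mul (continuous_sinh.comp hV.1)
  have hneg : ∀ᶠ t in 𝓝 c, 2 * (squareWave T t - m * sinh (V t)) < 0 := by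
    filter_upwards [hcont.continuousAt.eventually (lt_mem_nhds h)] with t ht
    linarith [(abs_le.1 (abs_squareWave_le_one T t)).2]
  obtain ⟨a, ha⟩ :=
    exists_lt_of_eventually_deriv_neg hV.integral_eq_sub hV.intervalIntegrable_deriv hneg
  exact (hc a).not_gt ha

lemma neg_one_le_mul_sinh_of_forall_ge (hV : IsSolF m T V) {c : ℝ} (hc : ∀ t, V c ≤ V t) :
    -1 ≤ m * sinh (V c) := by
  by_contra! h
  have hcont : Continuous fun t => m * sinh (V t) :=
    continuous_const.mul (continuous_sinh.comp hV.1)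
  have hneg : ∀ᶠ t in 𝓝 c, -(2 * (squareWave T t - m * sinh (V t))) < 0 := by
    filter_upwards [hcont.continuousAt.eventually (gt_mem_nhds h)] with t ht
    linarith [(abs_le.1 (abs_squareWave_le_one T t)).1]
  obtain ⟨a, ha⟩ := exists_lt_of_eventually_deriv_neg (f := fun t => -V t)
    (g := fun t => -(2 * (squareWave T t - m * sinh (V t))))
    (fun a b => by rw [intervalIntegral.integral_neg, hV.integral_eq_sub]; ring)
    (fun a b => (hV.intervalIntegrable_deriv a b).neg) hneg
  exact (hc a).not_gt (neg_lt_neg_iff.1 ha)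

lemma abs_mul_sinh_le_one (hV : IsSolF m T V) (hm : 0 ≤ m) (hT : T ≠ 0)
    (hper : Function.Periodic V (2 * T)) (t : ℝ) : |m * sinh (V t)| ≤ 1 := by
  have h2T : 2 * T ≠ 0 := mul_ne_zero two_ne_zero hT
  obtain ⟨c, hc⟩ := hper.exists_forall_ge h2T hV.1
  obtain ⟨d, hd⟩ := (hper.comp Neg.neg).exists_forall_ge h2T hV.1.neg
  have hd' : ∀ t, V d ≤ V t := fun t => neg_le_neg_iff.1 (hd t)
  rw [abs_le]
  constructor
  · calc -1 ≤ m * sinh (V d) := hV.neg_one_le_mul_sinh_of_forall_ge hd'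
      _ ≤ m * sinh (V t) := mul_le_mul_of_nonneg_left (sinh_le_sinh.2 (hd' t)) hm
  · calc m * sinh (V t) ≤ m * sinh (V c) := mul_le_mul_of_nonneg_left (sinh_le_sinh.2 (hc t)) hm
      _ ≤ 1 := hV.mul_sinh_le_one_of_forall_le hc

lemma integral_sinh_eq_zero (hV : IsSolF m T V) (hm : m ≠ 0) (hT : T ≠ 0)
    (hper : Function.Periodic V (2 * T)) : ∫ t in (0 : ℝ)..2 * T, sinh (V t) = 0 := by
  have h := hV.integral_eq_sub 0 (2 * T)
  rw [intervalIntegral.integral_const_mul, intervalIntegral.integral_sub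
    (intervalIntegrable_squareWave T _ _)
    (show IntervalIntegrable (fun t => m * sinh (V t)) volume 0 (2 * T) from
      (continuous_const.mul (continuous_sinh.comp hV.1)).intervalIntegrable _ _),
    intervalIntegral.integral_const_mul, integral_squareWave hT, show V (2 * T) = V 0 by
      simpa using hper 0, sub_self] at h
  simpa [hm] using h

lemma exists_eq_zero (hV : IsSolF m T V) (hm : m ≠ 0) (hT : 0 < T)
    (hper : Function.Periodic V (2 * T)) : ∃ t ∈ Icc 0 (2 * T), V t = 0 := by
  obtain ⟨t, ht, h⟩ := exists_eq_zero_of_intervalIntegral_eq_zero (by linarith)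
    (continuous_sinh.comp hV.1).continuousOn (hV.integral_sinh_eq_zero hm hT.ne' hper)
  exact ⟨t, ht, by simpa using h⟩

lemma abs_deriv_le_four (hbound : ∀ t, |m * sinh (V t)| ≤ 1) (t : ℝ) :
    |2 * (squareWave T t - m * sinh (V t))| ≤ 4 := by
  rw [abs_mul, abs_two]
  linarith [abs_sub (squareWave T t) (m * sinh (V t)), abs_squareWave_le_one T t, hbound t]

lemma abs_sub_le (hV : IsSolF m T V) (hbound : ∀ t, |m * sinh (V t)| ≤ 1) (a b : ℝ) :
    |V b - V a| ≤ 4 * |b - a| := by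
  have h := intervalIntegral.norm_integral_le_of_norm_le_const (a := a) (b := b)
    (f := fun t => 2 * (squareWave T t - m * sinh (V t))) fun t _ => abs_deriv_le_four hbound t
  rwa [Real.norm_eq_abs, hV.integral_eq_sub] at h

end IsSolF

lemma mul_cosh_sub_le_of_abs_le {m x C : ℝ} (hm : 0 ≤ m) (hx : |x| ≤ C)
    (hsinh : |m * sinh x| ≤ 1) : m * cosh x - m ≤ C :=
  calc m * cosh x - m = m * (cosh x - 1) := by ring
    _ ≤ m * (x * sinh x) := mul_le_mul_of_nonneg_left (cosh_sub_one_le_mul_sinh x) hm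
    _ = x * (m * sinh x) := by ring
    _ ≤ |x| * |m * sinh x| := by rw [← abs_mul]; exact le_abs_self _
    _ ≤ C * 1 := mul_le_mul hx hsinh (abs_nonneg _) ((abs_nonneg x).trans hx)
    _ = C := mul_one C

theorem statement7_general (ε : ℝ) (hε : 0 < ε)
    (P : ℝ → ℝ → ℝ → ℝ)
    (hP : ∀ m T : ℝ, 0 < m → 0 < T →
      IsSolF m T (P m T) ∧ Function.Periodic (P m T) (2 * T)) :
    ∃ Tss : ℝ, 0 < Tss ∧
      ∀ T : ℝ, 0 < T → T < Tss → ∀ m : ℝ, 0 < m → DeltaP ε m T (P m T) < 0 := by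
  refine ⟨ε / 8, by positivity, fun T hT hTε m hm => ?_⟩
  obtain ⟨hV, hper⟩ := hP m T hm hT
  have hbound := hV.abs_mul_sinh_le_one hm.le hT.ne' hper
  obtain ⟨t₀, ht₀, hzero⟩ := hV.exists_eq_zero hm.ne' hT hper
  have hsmall : ∀ s ∈ Icc 0 (2 * T), |P m T s| ≤ 8 * T := fun s hs =>
    calc |P m T s| = |P m T s - P m T t₀| := by rw [hzero, sub_zero]
      _ ≤ 4 * |s - t₀| := hV.abs_sub_le hbound t₀ s
      _ ≤ 4 * (2 * T) := by
        gcongr; exact abs_le.2 ⟨by linarith [hs.1, ht₀.2], by linarith [hs.2, ht₀.1]⟩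
      _ = 8 * T := by ring
  have hint : 0 < ∫ s in (0 : ℝ)..2 * T, -(2 * (m * cosh (P m T s) - m - ε)) := by
    have hPc := hV.1
    refine intervalIntegral.intervalIntegral_pos_of_pos_on
      (Continuous.intervalIntegrable (by fun_prop) _ _) (fun s hs => ?_) (by linarith)
    linarith [mul_cosh_sub_le_of_abs_le hm.le (hsmall s (Ioo_subset_Icc_self hs)) (hbound s)]
  rw [intervalIntegral.integral_neg] at hint
  rw [DeltaP]
  exact mul_neg_of_pos_of_neg (by positivity) (neg_pos.1 hint)

theorem statement7 (ε : ℝ) (hε : 0 < ε) (hε1 : ε < 1)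
    (P : ℝ → ℝ → ℝ → ℝ)
    (hP : ∀ m T : ℝ, 0 < m → 0 < T →
      IsSolF m T (P m T) ∧ Function.Periodic (P m T) (2 * T)) :
    ∃ Tss : ℝ, 0 < Tss ∧
      ∀ T : ℝ, 0 < T → T < Tss → ∀ m : ℝ, 0 < m → DeltaP ε m T (P m T) < 0 :=
  statement7_general ε hε P hP
end

section
/- Let 0 < ε ≤ 1, m > 0, T > 0. For h ∈ {−1, +1}, let M^h_{ε,m} be the 2×2 real matrix with rows (h − m − ε, m) and (m, −h − m − ε), and let M(ε,m,T) = exp(T·M^{−1}_{ε,m})·exp(T·M^{+1}_{ε,m}). Let σ(ε,m,T) be the spectral radius of M(ε,m,T), i.e. the maximum of the absolute values of its (real) eigenvalues. Then Δ(ε,m,T) = (1/T)·ln(σ(ε,m,T)). -/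
/-!
If `P` solves `F(m,T)` and `R' = m cosh P - m - ε`, then `x = e^R (e^{P/2}, e^{-P/2})` solves
`Σ(ε,m,T)`: `P = log (x₁ / x₂)` is the projective coordinate of the linear flow. For a
`2T`-periodic `P` this gives `x(2T) = e^{R(2T)} x(0)`, so `L = e^{R(2T)} = e^{TΔ}` is an
eigenvalue of `M(ε,m,T)`. By Liouville's formula `det M = e^{-4(m+ε)T}`, so the other eigenvalue
is `det M / L`, and `R(2T) ≥ -2εT` places it in `(0, L]`. Hence `σ = L`.
-/

open Real Filter Set

/-- The matrix `M^h_{ε,m}` of the linear system `Σ^h(ε,m)`. -/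
noncomputable def Mswitch (ε m h : ℝ) : Matrix (Fin 2) (Fin 2) ℝ :=
  !![h - m - ε, m; m, -h - m - ε]

/-- The period (monodromy) map `M(ε,m,T) = exp(T M⁻¹) exp(T M⁺¹)` of `Σ(ε,m,T)`. -/
noncomputable def monodromy (ε m T : ℝ) : Matrix (Fin 2) (Fin 2) ℝ :=
  NormedSpace.exp (T • Mswitch ε m (-1)) * NormedSpace.exp (T • Mswitch ε m 1)

open scoped Matrix

namespace Matrix

variable {n : Type*} [Fintype n] [DecidableEq n]

theorem hasDerivAt_exp_smul_apply (A : Matrix n n ℝ) (t : ℝ) (i j : n) :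
    HasDerivAt (fun s : ℝ => NormedSpace.exp (s • A) i j)
      ((A * NormedSpace.exp (t • A)) i j) t := by
  -- `exp` only depends on the topology, so any normed-algebra structure can be used here
  let := Matrix.linftyOpNormedRing (n := n) (α := ℝ)
  let := Matrix.linftyOpNormedAlgebra (R := ℝ) (n := n) (α := ℝ)
  exact (entryLinearMap ℝ ℝ i j).toContinuousLinearMap.hasFDerivAt.comp_hasDerivAt t
    (hasDerivAt_exp_smul_const' A t)

theorem mem_spectrum_of_mulVec_eq {K : Type*} [Field K] {M : Matrix n n K} {v : n → K} {μ : K}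
    (hv : v ≠ 0) (h : M *ᵥ v = μ • v) : μ ∈ spectrum K M := by
  rw [← spectrum_toLin']
  exact (Module.End.hasEigenvalue_of_hasEigenvector
    ⟨by simpa [Module.End.mem_eigenspace_iff] using h, hv⟩).mem_spectrum

theorem hasDerivAt_exp_smul_mulVec_apply {A : Matrix n n ℝ} {b t : ℝ} {x : ℝ → n → ℝ}
    {x' : n → ℝ} (hx : HasDerivAt x x' t) (i : n) :
    HasDerivAt (fun s => (NormedSpace.exp ((b - s) • A) *ᵥ x s) i)
      ((NormedSpace.exp ((b - t) • A) *ᵥ (x' - A *ᵥ x t)) i) t := by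
  have hE : ∀ j, HasDerivAt (fun s => NormedSpace.exp ((b - s) • A) i j)
      (-(A * NormedSpace.exp ((b - t) • A)) i j) t := fun j => by
    simpa [Function.comp_def] using
      (hasDerivAt_exp_smul_apply A (b - t) i j).scomp t ((hasDerivAt_id t).const_sub b)
  have hsum := HasDerivAt.fun_sum fun j (_ : j ∈ Finset.univ) =>
    (hE j).mul ((hasDerivAt_pi.mp hx) j)
  refine hsum.congr_deriv ?_
  rw [mulVec_sub, mulVec_mulVec, ← ((Commute.refl A).smul_right (b - t)).exp_right.eq]
  simp only [mul_comm, mul_neg, Finset.sum_add_distrib, Finset.sum_neg_distrib, Pi.sub_apply,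
    mulVec, dotProduct]
  ring

theorem eq_exp_smul_mulVec_of_hasDerivAt {A : Matrix n n ℝ} {a b : ℝ} (hab : a ≤ b)
    {x : ℝ → n → ℝ} (hcont : ContinuousOn x (Icc a b))
    (hderiv : ∀ t ∈ Ioo a b, HasDerivAt x (A *ᵥ x t) t) :
    x b = NormedSpace.exp ((b - a) • A) *ᵥ x a := by
  rcases hab.eq_or_lt with rfl | hab
  · simp
  -- mean value theorem for the components of `s ↦ exp ((b - s) • A) *ᵥ x s`, which is constant
  funext i
  have hE : ∀ j, Continuous fun s => NormedSpace.exp ((b - s) • A) i j := fun j =>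
    continuous_iff_continuousAt.mpr fun s =>
      (hasDerivAt_exp_smul_apply A (b - s) i j).continuousAt.comp (by fun_prop)
  obtain ⟨c, -, hslope⟩ := exists_hasDerivAt_eq_slope
    (fun s => (NormedSpace.exp ((b - s) • A) *ᵥ x s) i) _ hab
    (continuousOn_finsetSum _ fun j _ =>
      (hE j).continuousOn.mul ((continuous_apply j).comp_continuousOn hcont))
    fun t ht => hasDerivAt_exp_smul_mulVec_apply (hderiv t ht) i
  simp only [sub_self, mulVec_zero, Pi.zero_apply, zero_smul, NormedSpace.exp_zero,
    one_mulVec] at hslope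
  linarith [(div_eq_zero_iff.mp hslope.symm).resolve_right (sub_ne_zero.mpr hab.ne')]

theorem det_exp_smul_fin_two (A : Matrix (Fin 2) (Fin 2) ℝ) (t : ℝ) :
    (NormedSpace.exp (t • A)).det = Real.exp (t * A.trace) := by
  set E : ℝ → Matrix (Fin 2) (Fin 2) ℝ := fun s => NormedSpace.exp (s • A)
  set g : ℝ → ℝ := fun s =>
    Real.exp (-(s * A.trace)) * (E s 0 0 * E s 1 1 - E s 0 1 * E s 1 0)
  have hg : ∀ s, HasDerivAt g 0 s := fun s => by
    have hE := hasDerivAt_exp_smul_apply A s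
    refine ((hasDerivAt_mul_const A.trace).neg.exp.mul
      (((hE 0 0).mul (hE 1 1)).sub ((hE 0 1).mul (hE 1 0)))).congr_deriv ?_
    simp only [Pi.neg_apply, Pi.mul_apply, Pi.sub_apply, mul_apply, Fin.sum_univ_two,
      trace_fin_two]
    ring
  have hconst := is_const_of_deriv_eq_zero (fun s => (hg s).differentiableAt)
    (fun s => (hg s).deriv) t 0
  norm_num [g, E] at hconst
  rw [det_fin_two, ← mul_right_inj' (Real.exp_pos (-(t * A.trace))).ne', hconst, ← Real.exp_add,
    neg_add_cancel, Real.exp_zero]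

theorem spectrum_fin_two_eq_pair {K : Type*} [Field K] {M : Matrix (Fin 2) (Fin 2) K} {μ : K}
    (hμ : μ ∈ spectrum K M) (hμ0 : μ ≠ 0) : spectrum K M = {μ, M.det / μ} := by
  have hroot : μ ^ 2 - M.trace * μ + M.det = 0 := by
    simpa [mem_spectrum_iff_isRoot_charpoly, charpoly_fin_two] using hμ
  have htrace : M.trace = μ + M.det / μ := by
    field_simp
    linear_combination -hroot
  ext z
  rw [mem_spectrum_iff_isRoot_charpoly, charpoly_fin_two]
  suffices z ^ 2 - M.trace * z + M.det = (z - μ) * (z - M.det / μ) by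
    simp [this, sub_eq_zero]
  rw [htrace]
  field_simp
  ring

end Matrix

section SwitchedSystem

variable {ε m T : ℝ} {P : ℝ → ℝ}

theorem squareWave_of_mem_Ico_zero {t : ℝ} (hT : 0 < T) (ht : t ∈ Ico 0 T) :
    squareWave T t = 1 := by
  have hfract : Int.fract (t / (2 * T)) = t / (2 * T) :=
    Int.fract_eq_self.mpr ⟨by have := ht.1; positivity, by
      rw [div_lt_one (by positivity)]; linarith [ht.2]⟩
  rw [squareWave, if_pos (by rw [hfract, div_lt_iff₀ (by positivity)]; linarith [ht.2])]

theorem squareWave_of_mem_Ico_period {t : ℝ} (hT : 0 < T) (ht : t ∈ Ico T (2 * T)) :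
    squareWave T t = -1 := by
  have hfract : Int.fract (t / (2 * T)) = t / (2 * T) :=
    Int.fract_eq_self.mpr ⟨div_nonneg (by linarith [ht.1]) (by positivity), by
      rw [div_lt_one (by positivity)]; exact ht.2⟩
  rw [squareWave, if_neg (by rw [hfract, not_lt, le_div_iff₀ (by positivity)]; linarith [ht.1])]

theorem ne_int_mul_of_mem_Ioo {t : ℝ} (hT : 0 < T) {k : ℤ}
    (ht : t ∈ Ioo (k * T) ((k + 1) * T)) (n : ℤ) : t ≠ n * T := by
  rintro rfl
  have hlo : k < n := by exact_mod_cast lt_of_mul_lt_mul_right ht.1 hT.le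
  have hhi : (n : ℝ) < k + 1 := lt_of_mul_lt_mul_right ht.2 hT.le
  have : n < k + 1 := by exact_mod_cast hhi
  omega

theorem IsSolF.hasDerivAt_of_mem_Ioo_zero (hP : IsSolF m T P) (hT : 0 < T) {t : ℝ}
    (ht : t ∈ Ioo 0 T) : HasDerivAt P (2 * (1 - m * sinh (P t))) t := by
  have := hP.2 t (ne_int_mul_of_mem_Ioo hT (k := 0) (by simpa using ht))
  rwa [squareWave_of_mem_Ico_zero hT (Ioo_subset_Ico_self ht)] at this

theorem IsSolF.hasDerivAt_of_mem_Ioo_period (hP : IsSolF m T P) (hT : 0 < T) {t : ℝ}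
    (ht : t ∈ Ioo T (2 * T)) : HasDerivAt P (2 * (-1 - m * sinh (P t))) t := by
  have := hP.2 t <| ne_int_mul_of_mem_Ioo hT (k := 1) <| by
    push_cast; constructor <;> linarith [ht.1, ht.2]
  rwa [squareWave_of_mem_Ico_period hT (Ioo_subset_Ico_self ht)] at this

noncomputable def logGrowth (ε m : ℝ) (P : ℝ → ℝ) (t : ℝ) : ℝ :=
  ∫ s in (0 : ℝ)..t, (m * cosh (P s) - m - ε)

/-- The solution of `Σ(ε,m,T)` attached to a solution `P` of `F(m,T)`: it has
`log (x₁ / x₂) = P`, and `log (x₁ x₂) / 2` grows at the rate `m cosh P - m - ε`. -/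
noncomputable def liftedSolution (ε m : ℝ) (P : ℝ → ℝ) (t : ℝ) : Fin 2 → ℝ :=
  ![exp (logGrowth ε m P t + P t / 2), exp (logGrowth ε m P t - P t / 2)]

theorem hasDerivAt_logGrowth (hP : Continuous P) (t : ℝ) :
    HasDerivAt (logGrowth ε m P) (m * cosh (P t) - m - ε) t :=
  (Continuous.integral_hasStrictDerivAt (by fun_prop) 0 t).hasDerivAt

theorem continuous_liftedSolution (hP : Continuous P) : Continuous (liftedSolution ε m P) := by
  have hR : Continuous (logGrowth ε m P) :=
    continuous_iff_continuousAt.mpr fun t => (hasDerivAt_logGrowth hP t).continuousAt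
  refine continuous_pi fun i => ?_
  fin_cases i <;> simp only [liftedSolution] <;> fun_prop

theorem Mswitch_mulVec (h : ℝ) (v : Fin 2 → ℝ) :
    Mswitch ε m h *ᵥ v = ![(h - m - ε) * v 0 + m * v 1, m * v 0 + (-h - m - ε) * v 1] := by
  ext i
  fin_cases i <;> simp [Mswitch, Matrix.vecHead, Matrix.vecTail]

theorem hasDerivAt_liftedSolution (hP : Continuous P) {h t : ℝ}
    (hPt : HasDerivAt P (2 * (h - m * sinh (P t))) t) :
    HasDerivAt (liftedSolution ε m P) (Mswitch ε m h *ᵥ liftedSolution ε m P t) t := by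
  set R := logGrowth ε m P t
  have hR := hasDerivAt_logGrowth (ε := ε) (m := m) hP t
  have hx₁ : HasDerivAt (fun s => exp (logGrowth ε m P s + P s / 2))
      (exp (R + P t / 2) * (m * cosh (P t) - m - ε + 2 * (h - m * sinh (P t)) / 2)) t :=
    (hR.add (hPt.div_const 2)).exp
  have hx₂ : HasDerivAt (fun s => exp (logGrowth ε m P s - P s / 2))
      (exp (R - P t / 2) * (m * cosh (P t) - m - ε - 2 * (h - m * sinh (P t)) / 2)) t :=
    (hR.sub (hPt.div_const 2)).exp
  have hcosh_sub : exp (R + P t / 2) * (cosh (P t) - sinh (P t)) = exp (R - P t / 2) := by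
    rw [cosh_sub_sinh, ← exp_add]; ring_nf
  have hcosh_add : exp (R - P t / 2) * (cosh (P t) + sinh (P t)) = exp (R + P t / 2) := by
    rw [cosh_add_sinh, ← exp_add]; ring_nf
  rw [Mswitch_mulVec, hasDerivAt_pi, Fin.forall_fin_two]
  simp only [liftedSolution, Matrix.cons_val_zero, Matrix.cons_val_one]
  exact ⟨hx₁.congr_deriv (by linear_combination m * hcosh_sub),
    hx₂.congr_deriv (by linear_combination m * hcosh_add)⟩

theorem monodromy_mulVec_liftedSolution (hT : 0 < T) (hP : IsSolF m T P) :
    monodromy ε m T *ᵥ liftedSolution ε m P 0 = liftedSolution ε m P (2 * T) := by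
  have hcont := continuous_liftedSolution (ε := ε) (m := m) hP.1
  have hfirst := Matrix.eq_exp_smul_mulVec_of_hasDerivAt hT.le hcont.continuousOn
    fun t ht => hasDerivAt_liftedSolution hP.1 (hP.hasDerivAt_of_mem_Ioo_zero hT ht)
  have hsecond := Matrix.eq_exp_smul_mulVec_of_hasDerivAt (by linarith) hcont.continuousOn
    fun t ht => hasDerivAt_liftedSolution hP.1 (hP.hasDerivAt_of_mem_Ioo_period hT ht)
  rw [hsecond, hfirst, Matrix.mulVec_mulVec, sub_zero, two_mul, add_sub_cancel_right, monodromy]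

theorem liftedSolution_add_period (hP : Function.Periodic P (2 * T)) :
    liftedSolution ε m P (2 * T) = exp (logGrowth ε m P (2 * T)) • liftedSolution ε m P 0 := by
  have hR0 : logGrowth ε m P 0 = 0 := intervalIntegral.integral_same
  have hP0 : P (2 * T) = P 0 := by simpa using hP 0
  ext i
  fin_cases i <;> simp [liftedSolution, ← exp_add, hR0, hP0, sub_eq_add_neg]

theorem liftedSolution_ne_zero (t : ℝ) : liftedSolution ε m P t ≠ 0 :=
  fun h => exp_ne_zero _ (congrFun h 0)

theorem trace_Mswitch (h : ℝ) : (Mswitch ε m h).trace = -(2 * (m + ε)) := by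
  rw [Mswitch, Matrix.trace_fin_two_of]; ring

theorem det_monodromy : (monodromy ε m T).det = exp (-(4 * (m + ε) * T)) := by
  rw [monodromy, Matrix.det_mul, Matrix.det_exp_smul_fin_two, Matrix.det_exp_smul_fin_two,
    trace_Mswitch, trace_Mswitch, ← exp_add]
  ring_nf

theorem neg_mul_le_logGrowth (hP : Continuous P) (hm : 0 ≤ m) {t : ℝ} (ht : 0 ≤ t) :
    -(ε * t) ≤ logGrowth ε m P t := by
  have hle : ∀ s ∈ Icc 0 t, -ε ≤ m * cosh (P s) - m - ε := fun s _ => by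
    nlinarith [one_le_cosh (P s)]
  have hint : IntervalIntegrable (fun s => m * cosh (P s) - m - ε) MeasureTheory.volume 0 t :=
    (by fun_prop : Continuous fun s => m * cosh (P s) - m - ε).intervalIntegrable _ _
  simpa [logGrowth, mul_comm] using
    intervalIntegral.integral_mono_on ht intervalIntegrable_const hint hle

theorem DeltaP_eq_logGrowth_div (hT : T ≠ 0) :
    DeltaP ε m T P = logGrowth ε m P (2 * T) / T := by
  rw [DeltaP, intervalIntegral.integral_const_mul, logGrowth]
  field_simp

end SwitchedSystem

theorem statement13_general (ε m T : ℝ) (hm : 0 < m) (hT : 0 < T)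
    (P : ℝ → ℝ) (hP : IsSolF m T P) (hPper : Function.Periodic P (2 * T)) :
    DeltaP ε m T P =
      (1 / T) * Real.log (sSup ((fun x : ℝ => |x|) '' spectrum ℝ (monodromy ε m T))) := by
  set L := exp (logGrowth ε m P (2 * T))
  have hL : 0 < L := exp_pos _
  have heig : monodromy ε m T *ᵥ liftedSolution ε m P 0 = L • liftedSolution ε m P 0 := by
    rw [monodromy_mulVec_liftedSolution hT hP, liftedSolution_add_period hPper]
  have hspec := Matrix.spectrum_fin_two_eq_pair
    (Matrix.mem_spectrum_of_mulVec_eq (liftedSolution_ne_zero 0) heig) hL.ne'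
  have hdet_pos : 0 < (monodromy ε m T).det := by rw [det_monodromy]; positivity
  have hdet_le : (monodromy ε m T).det ≤ L * L := by
    rw [det_monodromy, ← exp_add, exp_le_exp]
    linarith [neg_mul_le_logGrowth (ε := ε) hP.1 hm.le (by positivity : 0 ≤ 2 * T),
      mul_pos hm hT]
  rw [hspec, image_pair, abs_of_pos hL, abs_of_pos (div_pos hdet_pos hL), csSup_pair,
    max_eq_left ((div_le_iff₀ hL).mpr hdet_le), log_exp, DeltaP_eq_logGrowth_div hT.ne']
  ring

theorem statement13 (ε m T : ℝ) (hε : 0 < ε) (hε1 : ε ≤ 1) (hm : 0 < m) (hT : 0 < T)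
    (P : ℝ → ℝ) (hP : IsSolF m T P) (hPper : Function.Periodic P (2 * T)) :
    DeltaP ε m T P =
      (1 / T) * Real.log (sSup ((fun x : ℝ => |x|) '' spectrum ℝ (monodromy ε m T))) :=
  statement13_general ε m T hm hT P hP hPper
end
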